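/- arXiv:1802.04098 — 5 statements merged into one kernel-verified Lean document; each statement's English description precedes it below -/
import Mathlib

section
/- Let (X, μ) be a σ-finite measure space, let T > 0, and let γ : [0, T] → (X → ℝ) be such that γ(t) is measurable for every t ∈ [0, T]. Fix 0 ≤ t₁ < t₂ < t₃ ≤ T, and let V₁₂, V₂₃, V₁₃ : X → [0, ∞] be essential variations of γ over the intervals [t₁, t₂], [t₂, t₃], and [t₁, t₃] respectively. Then V₁₃ = V₁₂ + V₂₃ μ-almost everywhere on X. -/
/-!
Pointwise in `x`, clamping the points of a partition of `[t₁, t₃]` to `≤ t₂` and to `≥ t₂` gives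
partitions of `[t₁, t₂]` and `[t₂, t₃]` whose variation sums together dominate the original one
(triangle inequality), and concatenating partitions of `[t₁, t₂]` and `[t₂, t₃]` adds their
variation sums. The first fact makes `V₁₂ + V₂₃` a measurable upper bound of the family defining
`V₁₃`. The families are uncountable, so the converse cannot be read off pointwise; instead, for a
fixed partition `r` of `[t₂, t₃]` with variation sum `σ`, `V₁₃ - σ` is a measurable upper bound of
the family defining `V₁₂`, so `V₁₂ + σ ≤ V₁₃` a.e., and then `V₁₃ - V₁₂` is one of the family
defining `V₂₃`.
-/

open MeasureTheory

/-- An essential supremum of a family `(v i)` of measurable functions from `X` to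
`[-∞, ∞]` (with respect to `μ`). -/
def IsEssSupFamily {X : Type*} [MeasurableSpace X] (μ : Measure X) {I : Sort*}
    (v : I → X → EReal) (vbar : X → EReal) : Prop :=
  Measurable vbar ∧ (∀ i, ∀ᵐ x ∂μ, v i x ≤ vbar x) ∧
    ∀ w : X → EReal, Measurable w → (∀ i, ∀ᵐ x ∂μ, v i x ≤ w x) →
      ∀ᵐ x ∂μ, vbar x ≤ w x

/-- `V : X → [0, ∞]` is an essential variation of `γ` over the interval `[a, b]`:
it is an essential supremum of the family of functions
`x ↦ ∑_{i=1}^{j} |γ(s_i; x) - γ(s_{i-1}; x)|`, indexed by all finite partitions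
`a = s₀ < s₁ < ⋯ < s_j = b` of `[a, b]`. -/
def IsEssVariation {X : Type*} [MeasurableSpace X] (μ : Measure X)
    (γ : ℝ → X → ℝ) (a b : ℝ) (V : X → ENNReal) : Prop :=
  IsEssSupFamily μ
    (fun p : {p : ℕ × (ℕ → ℝ) // p.2 0 = a ∧ p.2 p.1 = b ∧ StrictMonoOn p.2 (Set.Iic p.1)} =>
      fun x =>
        ((∑ i ∈ Finset.range p.1.1, |γ (p.1.2 (i + 1)) x - γ (p.1.2 i) x| : ℝ) : EReal))
    (fun x => (V x : EReal))

open Finset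
open scoped ENNReal

section VariationSum

variable {α E : Type*} [PseudoEMetricSpace E]

noncomputable def variationSum (f : α → E) (n : ℕ) (s : ℕ → α) : ℝ≥0∞ :=
  ∑ i ∈ range n, edist (f (s (i + 1))) (f (s i))

theorem variationSum_succ (f : α → E) (n : ℕ) (s : ℕ → α) :
    variationSum f (n + 1) s = variationSum f n s + edist (f (s (n + 1))) (f (s n)) :=
  sum_range_succ _ _

theorem variationSum_congr (f : α → E) {n : ℕ} {s t : ℕ → α} (h : ∀ i ≤ n, s i = t i) :
    variationSum f n s = variationSum f n t :=
  sum_congr rfl fun i hi => by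
    have hi : i < n := mem_range.1 hi
    rw [h i hi.le, h (i + 1) hi]

theorem edist_le_edist_min_add_edist_max [LinearOrder α] (f : α → E) (y z b : α) :
    edist (f z) (f y) ≤ edist (f (min z b)) (f (min y b)) + edist (f (max z b)) (f (max y b)) := by
  rcases le_total y b with hy | hy <;> rcases le_total z b with hz | hz <;>
    simp only [min_eq_left, min_eq_right, max_eq_left, max_eq_right, hy, hz, edist_self,
      add_zero, zero_add, le_refl]
  · exact (edist_triangle _ _ _).trans_eq (add_comm _ _)
  · exact edist_triangle _ _ _

theorem variationSum_le_min_add_max [LinearOrder α] (f : α → E) (n : ℕ) (s : ℕ → α) (b : α) :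
    variationSum f n s ≤
      variationSum f n (fun i => min (s i) b) + variationSum f n (fun i => max (s i) b) := by
  rw [variationSum, variationSum, variationSum, ← sum_add_distrib]
  gcongr with i
  exact edist_le_edist_min_add_edist_max f (s i) (s (i + 1)) b

theorem variationSum_eq_ofReal_sum_abs (f : α → ℝ) (n : ℕ) (s : ℕ → α) :
    variationSum f n s = ENNReal.ofReal (∑ i ∈ range n, |f (s (i + 1)) - f (s i)|) := by
  rw [variationSum, ENNReal.ofReal_sum_of_nonneg fun _ _ => abs_nonneg _]
  simp only [edist_dist, Real.dist_eq]

end VariationSum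

abbrev IntervalPartition {α : Type*} [Preorder α] (a b : α) :=
  {p : ℕ × (ℕ → α) // p.2 0 = a ∧ p.2 p.1 = b ∧ StrictMonoOn p.2 (Set.Iic p.1)}

namespace IntervalPartition

variable {α E X : Type*}

section Preorder

variable [Preorder α] {a b c : α}

theorem mem_Icc (p : IntervalPartition a b) {i : ℕ} (hi : i ≤ p.1.1) : p.1.2 i ∈ Set.Icc a b := by
  obtain ⟨⟨n, s⟩, rfl, rfl, hs⟩ := p
  exact ⟨hs.monotoneOn (by simp) (by simpa using hi) (Nat.zero_le i),
    hs.monotoneOn (by simpa using hi) (by simp) hi⟩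

def refl (a : α) : IntervalPartition a a :=
  ⟨(0, fun _ => a), rfl, rfl, strictMonoOn_Iic_of_lt_succ fun m hm => absurd hm m.not_lt_zero⟩

def snoc (p : IntervalPartition a b) (hbc : b < c) : IntervalPartition a c :=
  ⟨(p.1.1 + 1, Function.update p.1.2 (p.1.1 + 1) c), by simpa using p.2.1, by simp, by
    refine strictMonoOn_Iic_of_lt_succ fun i hi => ?_
    dsimp only
    rw [Order.succ_eq_add_one]
    rcases (Nat.lt_succ_iff.1 hi).lt_or_eq with hi | rfl
    · rw [Function.update_of_ne (by omega), Function.update_of_ne (by omega)]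
      exact p.2.2.2 (Set.mem_Iic.2 hi.le) (Set.mem_Iic.2 hi) (Nat.lt_add_one i)
    · rw [Function.update_self, Function.update_of_ne (by omega), p.2.2.1]
      exact hbc⟩

theorem variationSum_snoc [PseudoEMetricSpace E] (f : α → E) (p : IntervalPartition a b)
    (hbc : b < c) :
    variationSum f (p.snoc hbc).1.1 (p.snoc hbc).1.2 =
      variationSum f p.1.1 p.1.2 + edist (f c) (f b) := by
  simp only [snoc]
  rw [variationSum_succ, Function.update_self, Function.update_of_ne (by omega), p.2.2.1,
    variationSum_congr f fun i hi => Function.update_of_ne (by omega) _ _]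

theorem nonempty_of_lt (h : a < b) : Nonempty (IntervalPartition a b) :=
  ⟨(refl a).snoc h⟩

theorem exists_variationSum_eq_add [PseudoEMetricSpace E] (q : IntervalPartition a b)
    (r : IntervalPartition b c) :
    ∃ p : IntervalPartition a c, ∀ f : α → E,
      variationSum f p.1.1 p.1.2 = variationSum f q.1.1 q.1.2 + variationSum f r.1.1 r.1.2 := by
  obtain ⟨⟨k, v⟩, rfl, rfl, hv⟩ := r
  induction k with
  | zero => exact ⟨q, fun f => by simp [variationSum]⟩
  | succ k ih =>
    obtain ⟨p, hp⟩ := ih q (hv.mono (Set.Iic_subset_Iic.2 k.le_succ))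
    refine ⟨p.snoc (hv (by simp) (by simp) k.lt_succ_self), fun f => ?_⟩
    rw [variationSum_snoc, hp, variationSum_succ, add_assoc]

theorem measurable_variationSum [PseudoEMetricSpace E] [MeasurableSpace E]
    [OpensMeasurableSpace E] [SecondCountableTopology E] [MeasurableSpace X]
    {γ : α → X → E} (hγ : ∀ t ∈ Set.Icc a b, Measurable (γ t)) (p : IntervalPartition a b) :
    Measurable fun x => variationSum (γ · x) p.1.1 p.1.2 :=
  Finset.measurable_sum _ fun i hi =>
    have hi : i < p.1.1 := mem_range.1 hi
    (hγ _ (p.mem_Icc hi)).edist (hγ _ (p.mem_Icc hi.le))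

end Preorder

section LinearOrder

variable [LinearOrder α] {a b c : α}

theorem exists_variationSum_eq_of_monotoneOn [PseudoEMetricSpace E] {n : ℕ} {s : ℕ → α}
    (hs : MonotoneOn s (Set.Iic n)) (h0 : s 0 = a) (hn : s n = b) :
    ∃ p : IntervalPartition a b, ∀ f : α → E, variationSum f p.1.1 p.1.2 = variationSum f n s := by
  subst h0 hn
  induction n with
  | zero => exact ⟨refl (s 0), fun f => rfl⟩
  | succ n ih =>
    obtain ⟨p, hp⟩ := ih (hs.mono (Set.Iic_subset_Iic.2 n.le_succ))
    rcases (hs (by simp) (by simp) n.le_succ).eq_or_lt with heq | hlt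
    · rw [← heq]
      exact ⟨p, fun f => by rw [variationSum_succ, ← heq, edist_self, add_zero, hp]⟩
    · exact ⟨p.snoc hlt, fun f => by rw [variationSum_snoc, hp, variationSum_succ]⟩

theorem exists_variationSum_le_add [PseudoEMetricSpace E] (p : IntervalPartition a c)
    (hab : a ≤ b) (hbc : b ≤ c) :
    ∃ q : IntervalPartition a b, ∃ r : IntervalPartition b c, ∀ f : α → E,
      variationSum f p.1.1 p.1.2 ≤ variationSum f q.1.1 q.1.2 + variationSum f r.1.1 r.1.2 := by
  obtain ⟨⟨n, s⟩, rfl, rfl, hs⟩ := p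
  obtain ⟨q, hq⟩ := exists_variationSum_eq_of_monotoneOn (E := E)
    ((monotone_id.min monotone_const).comp_monotoneOn hs.monotoneOn)
    (min_eq_left hab) (min_eq_right hbc)
  obtain ⟨r, hr⟩ := exists_variationSum_eq_of_monotoneOn (E := E)
    ((monotone_id.max monotone_const).comp_monotoneOn hs.monotoneOn)
    (max_eq_right hab) (max_eq_left hbc)
  exact ⟨q, r, fun f => (variationSum_le_min_add_max f n s b).trans_eq (by rw [hq, hr]; rfl)⟩

end LinearOrder

end IntervalPartition

section EssSup

variable {X : Type*} [MeasurableSpace X] {μ : Measure X} {I : Sort*}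

namespace IsEssSupFamily

theorem measurable_ennreal {v : I → X → EReal} {V : X → ℝ≥0∞}
    (hV : IsEssSupFamily μ v fun x => (V x : EReal)) : Measurable V :=
  (continuous_coe_ennreal_ereal.measurableEmbedding
    EReal.coe_ennreal_injective).measurable_comp_iff.1 hV.1

variable {v : I → X → ℝ≥0∞} {V : X → ℝ≥0∞}

theorem ae_le (hV : IsEssSupFamily μ (fun i x => (v i x : EReal)) fun x => (V x : EReal))
    (i : I) : ∀ᵐ x ∂μ, v i x ≤ V x :=
  (hV.2.1 i).mono fun _ hx => EReal.coe_ennreal_le_coe_ennreal_iff.1 hx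

theorem ae_le_of_forall_ae_le
    (hV : IsEssSupFamily μ (fun i x => (v i x : EReal)) fun x => (V x : EReal))
    {w : X → ℝ≥0∞} (hw : Measurable w) (h : ∀ i, ∀ᵐ x ∂μ, v i x ≤ w x) :
    ∀ᵐ x ∂μ, V x ≤ w x :=
  (hV.2.2 _ hw.coe_ereal_ennreal fun i =>
    (h i).mono fun _ hx => EReal.coe_ennreal_le_coe_ennreal_iff.2 hx).mono
    fun _ hx => EReal.coe_ennreal_le_coe_ennreal_iff.1 hx

theorem ae_add_le_of_forall_ae_add_le [Nonempty I]
    (hV : IsEssSupFamily μ (fun i x => (v i x : EReal)) fun x => (V x : EReal))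
    {a U : X → ℝ≥0∞} (ha : Measurable a) (hU : Measurable U)
    (h : ∀ i, ∀ᵐ x ∂μ, v i x + a x ≤ U x) : ∀ᵐ x ∂μ, V x + a x ≤ U x := by
  obtain ⟨i₀⟩ := ‹Nonempty I›
  -- `U - a` would be wrong where `a = ⊤`, since `⊤ - ⊤ = 0` in `ℝ≥0∞`.
  have hg : Measurable fun x => if a x = ⊤ then ⊤ else U x - a x :=
    Measurable.ite (measurableSet_eq_fun ha measurable_const) measurable_const (hU.sub ha)
  have hvg : ∀ i, ∀ᵐ x ∂μ, v i x ≤ if a x = ⊤ then ⊤ else U x - a x := fun i =>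
    (h i).mono fun x hx => by
      split_ifs with ha_top
      · exact le_top
      · exact ENNReal.le_sub_of_add_le_right ha_top hx
  filter_upwards [hV.ae_le_of_forall_ae_le hg hvg, h i₀] with x hVx hi₀
  have haU : a x ≤ U x := le_add_self.trans hi₀
  split_ifs at hVx with ha_top
  · simp [ha_top, top_le_iff.1 (ha_top ▸ haU)]
  · exact (ENNReal.le_sub_iff_add_le_right ha_top haU).1 hVx

theorem ae_eq_add {J K : Sort*} [Nonempty I] [Nonempty J] {w : J → X → ℝ≥0∞}
    {u : K → X → ℝ≥0∞} {W U : X → ℝ≥0∞}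
    (hV : IsEssSupFamily μ (fun i x => (v i x : EReal)) fun x => (V x : EReal))
    (hW : IsEssSupFamily μ (fun j x => (w j x : EReal)) fun x => (W x : EReal))
    (hU : IsEssSupFamily μ (fun k x => (u k x : EReal)) fun x => (U x : EReal))
    (hw : ∀ j, Measurable (w j)) (hsplit : ∀ k, ∃ i j, ∀ x, u k x ≤ v i x + w j x)
    (hjoin : ∀ i j, ∃ k, ∀ x, v i x + w j x ≤ u k x) :
    ∀ᵐ x ∂μ, U x = V x + W x := by
  have hU_le : ∀ᵐ x ∂μ, U x ≤ V x + W x :=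
    hU.ae_le_of_forall_ae_le (hV.measurable_ennreal.add hW.measurable_ennreal) fun k => by
      obtain ⟨i, j, hk⟩ := hsplit k
      filter_upwards [hV.ae_le i, hW.ae_le j] with x hi hj
      exact (hk x).trans (add_le_add hi hj)
  have hV_add_le : ∀ j, ∀ᵐ x ∂μ, V x + w j x ≤ U x := fun j =>
    hV.ae_add_le_of_forall_ae_add_le (hw j) hU.measurable_ennreal fun i => by
      obtain ⟨k, hk⟩ := hjoin i j
      exact (hU.ae_le k).mono fun x hx => (hk x).trans hx
  have hW_add_le : ∀ᵐ x ∂μ, W x + V x ≤ U x :=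
    hW.ae_add_le_of_forall_ae_add_le hV.measurable_ennreal hU.measurable_ennreal fun j =>
      (hV_add_le j).mono fun x hx => (add_comm _ _).trans_le hx
  filter_upwards [hU_le, hW_add_le] with x h₁ h₂
  exact h₁.antisymm ((add_comm _ _).trans_le h₂)

end IsEssSupFamily

theorem isEssVariation_iff {γ : ℝ → X → ℝ} {a b : ℝ} {V : X → ℝ≥0∞} :
    IsEssVariation μ γ a b V ↔
      IsEssSupFamily μ
        (fun (p : IntervalPartition a b) x => (variationSum (γ · x) p.1.1 p.1.2 : EReal))
        fun x => (V x : EReal) := by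
  simp only [IsEssVariation, variationSum_eq_ofReal_sum_abs, EReal.coe_ennreal_ofReal,
    max_eq_left, sum_nonneg, abs_nonneg, implies_true]

end EssSup

theorem essVariation_add_general {X : Type*} [MeasurableSpace X] (μ : Measure X)
    (T : ℝ) (γ : ℝ → X → ℝ)
    (hγ : ∀ t ∈ Set.Icc (0 : ℝ) T, Measurable (γ t))
    (t₁ t₂ t₃ : ℝ) (h₀ : 0 ≤ t₁) (h₁₂ : t₁ < t₂) (h₂₃ : t₂ < t₃) (h₃ : t₃ ≤ T)
    (V₁₂ V₂₃ V₁₃ : X → ENNReal)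
    (hV₁₂ : IsEssVariation μ γ t₁ t₂ V₁₂)
    (hV₂₃ : IsEssVariation μ γ t₂ t₃ V₂₃)
    (hV₁₃ : IsEssVariation μ γ t₁ t₃ V₁₃) :
    ∀ᵐ x ∂μ, V₁₃ x = V₁₂ x + V₂₃ x := by
  have := IntervalPartition.nonempty_of_lt h₁₂
  have := IntervalPartition.nonempty_of_lt h₂₃
  have hγ₂₃ : ∀ t ∈ Set.Icc t₂ t₃, Measurable (γ t) := fun t ht =>
    hγ t ⟨h₀.trans (h₁₂.le.trans ht.1), ht.2.trans h₃⟩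
  refine (isEssVariation_iff.1 hV₁₂).ae_eq_add (isEssVariation_iff.1 hV₂₃)
    (isEssVariation_iff.1 hV₁₃) (IntervalPartition.measurable_variationSum hγ₂₃)
    (fun p => ?_) (fun q r => ?_)
  · obtain ⟨q, r, h⟩ := p.exists_variationSum_le_add (E := ℝ) h₁₂.le h₂₃.le
    exact ⟨q, r, fun x => h _⟩
  · obtain ⟨p, h⟩ := q.exists_variationSum_eq_add (E := ℝ) r
    exact ⟨p, fun x => (h _).ge⟩

/-- Additivity of the essential variation: if `V₁₂`, `V₂₃`, `V₁₃` are essential variations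
of `γ` over `[t₁, t₂]`, `[t₂, t₃]`, `[t₁, t₃]` respectively, then
`V₁₃ = V₁₂ + V₂₃` `μ`-a.e. -/
theorem essVariation_add {X : Type*} [MeasurableSpace X] (μ : Measure X) [SigmaFinite μ]
    (T : ℝ) (hT : 0 < T) (γ : ℝ → X → ℝ)
    (hγ : ∀ t ∈ Set.Icc (0 : ℝ) T, Measurable (γ t))
    (t₁ t₂ t₃ : ℝ) (h₀ : 0 ≤ t₁) (h₁₂ : t₁ < t₂) (h₂₃ : t₂ < t₃) (h₃ : t₃ ≤ T)
    (V₁₂ V₂₃ V₁₃ : X → ENNReal)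
    (hV₁₂ : IsEssVariation μ γ t₁ t₂ V₁₂)
    (hV₂₃ : IsEssVariation μ γ t₂ t₃ V₂₃)
    (hV₁₃ : IsEssVariation μ γ t₁ t₃ V₁₃) :
    ∀ᵐ x ∂μ, V₁₃ x = V₁₂ x + V₂₃ x :=
  essVariation_add_general μ T γ hγ t₁ t₂ t₃ h₀ h₁₂ h₂₃ h₃ V₁₂ V₂₃ V₁₃ hV₁₂ hV₂₃ hV₁₃
end

section
/- Let (X, μ) be a σ-finite measure space, let T > 0, let γ' : [0, T] → L²(X, μ; ℝ) be Bochner integrable, and let γ : [0, T] → L²(X, μ; ℝ) satisfy γ(t) = γ(0) + ∫₀ᵗ γ'(τ) dτ (Bochner integral in L²) for every t ∈ [0, T]. Choose for each t ∈ [0, T] a measurable representative of γ(t). Then for every 0 ≤ s ≤ t ≤ T, any essential variation V of γ over [s, t] satisfies V ≤ ∫ₛᵗ |γ'(τ)| dτ μ-almost everywhere on X (the right-hand side being any representative of the Bochner integral in L² of τ ↦ |γ'(τ)|); in particular V is μ-a.e. finite, V ∈ L²(X, μ; ℝ), and ‖V‖_{L²(X,μ)} ≤ ∫ₛᵗ ‖γ'(τ)‖_{L²(X,μ)}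 dτ. -/
open MeasureTheory intervalIntegral

/-!
In the Banach lattice `L²(X, μ)` the Bochner integral is monotone (its positive cone is closed),
so `|γ v - γ u| = |∫ᵤᵛ γ'| ≤ ∫ᵤᵛ |γ'|` holds in `L²`, hence pointwise a.e. Summing over a
partition of `[s, t]` bounds every partition sum of the representatives a.e. by `∫ₛᵗ |γ'|`, so the
essential supremum `V` is bounded by it too; the `L²` bounds on `V` then come from
`‖∫ₛᵗ |γ'|‖ ≤ ∫ₛᵗ ‖γ'‖`.
-/

section BanachLattice

variable {E : Type*} [NormedAddCommGroup E] [NormedSpace ℝ E] [Lattice E] [HasSolidNorm E]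
  [IsOrderedAddMonoid E] [IsOrderedModule ℝ E] [ClosedIciTopology E]

theorem abs_integral_le_integral_abs_of_hasSolidNorm {α : Type*} [MeasurableSpace α]
    {μ : Measure α} (f : α → E) : |∫ a, f a ∂μ| ≤ ∫ a, |f a| ∂μ := by
  by_cases hf : Integrable f μ
  · refine abs_le'.2 ⟨integral_mono_ae hf hf.abs (ae_of_all _ fun a => le_abs_self _), ?_⟩
    rw [← MeasureTheory.integral_neg]
    exact integral_mono_ae hf.neg hf.abs (ae_of_all _ fun a => neg_le_abs _)
  · rw [integral_undef hf, abs_zero]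
    exact integral_nonneg fun a => abs_nonneg _

theorem abs_intervalIntegral_le_integral_abs_of_hasSolidNorm {a b : ℝ} (hab : a ≤ b)
    (f : ℝ → E) : |∫ x in a..b, f x| ≤ ∫ x in a..b, |f x| := by
  simpa only [integral_of_le hab] using abs_integral_le_integral_abs_of_hasSolidNorm f

end BanachLattice

namespace MeasureTheory.Lp

variable {X E : Type*} [MeasurableSpace X] {μ : Measure X} {p : ENNReal}

theorem coeFn_finset_sum [NormedAddCommGroup E] {ι : Type*} (s : Finset ι)
    (f : ι → Lp E p μ) : ⇑(∑ i ∈ s, f i) =ᵐ[μ] fun x => ∑ i ∈ s, f i x := by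
  classical
  induction s using Finset.induction_on with
  | empty => exact Lp.coeFn_zero E p μ
  | insert a s ha ih =>
    filter_upwards [Lp.coeFn_add (f a) (∑ i ∈ s, f i), ih] with x hadd hsum
    simp only [Finset.sum_insert ha, hadd, Pi.add_apply, hsum]

instance instIsOrderedModule [NormedAddCommGroup E] [NormedSpace ℝ E] [PartialOrder E]
    [IsOrderedAddMonoid E] [IsOrderedModule ℝ E] : IsOrderedModule ℝ (Lp E p μ) :=
  IsOrderedModule.of_smul_nonneg fun c hc f hf => by
    rw [← Lp.coeFn_nonneg] at hf ⊢
    filter_upwards [Lp.coeFn_smul c f, hf] with x hcf hfx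
    rw [hcf]
    exact smul_nonneg hc hfx

theorem ae_abs_sub_le_of_abs_sub_le [NormedAddCommGroup E] [Lattice E] [HasSolidNorm E]
    [IsOrderedAddMonoid E] {f g h : Lp E p μ} (hle : |f - g| ≤ h) :
    ∀ᵐ x ∂μ, |f x - g x| ≤ h x := by
  filter_upwards [(Lp.coeFn_le _ _).2 hle, Lp.coeFn_abs (f - g), Lp.coeFn_sub f g]
    with x hx habs hsub
  rwa [habs, hsub] at hx

end MeasureTheory.Lp

theorem ae_sum_abs_sub_le_intervalIntegral {X : Type*} [MeasurableSpace X] {μ : Measure X}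
    {p : ENNReal} [Fact (1 ≤ p)] {F : ℝ → X → ℝ} {g : ℝ → Lp ℝ p μ} {a : ℕ → ℝ} {n : ℕ}
    (hg : ∀ i < n, IntervalIntegrable g volume (a i) (a (i + 1)))
    (hF : ∀ i < n, ∀ᵐ x ∂μ, |F (a (i + 1)) x - F (a i) x| ≤ (∫ τ in a i..a (i + 1), g τ) x) :
    ∀ᵐ x ∂μ, ∑ i ∈ Finset.range n, |F (a (i + 1)) x - F (a i) x| ≤ (∫ τ in a 0..a n, g τ) x := by
  have hF' : ∀ᵐ x ∂μ, ∀ i ∈ Finset.range n,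
      |F (a (i + 1)) x - F (a i) x| ≤ (∫ τ in a i..a (i + 1), g τ) x :=
    (Filter.eventually_all_finset _).2 fun i hi => hF i (Finset.mem_range.1 hi)
  rw [← sum_integral_adjacent_intervals fun i hi => hg i hi]
  filter_upwards [hF', Lp.coeFn_finset_sum (Finset.range n) fun i => ∫ τ in a i..a (i + 1), g τ]
    with x hx hsum
  rw [hsum]
  exact Finset.sum_le_sum hx

section AbsolutelyContinuous

variable {E : Type*} [NormedAddCommGroup E] [NormedSpace ℝ E] [Lattice E] [HasSolidNorm E]
  [IsOrderedAddMonoid E] [IsOrderedModule ℝ E] [ClosedIciTopology E]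
  {γ γ' : ℝ → E} {T : ℝ}

theorem abs_sub_le_integral_abs_of_eq_add_integral (hint : IntegrableOn γ' (Set.Icc 0 T))
    (hγ : ∀ t ∈ Set.Icc (0 : ℝ) T, γ t = γ 0 + ∫ τ in (0 : ℝ)..t, γ' τ) {u v : ℝ}
    (hu : u ∈ Set.Icc 0 T) (hv : v ∈ Set.Icc 0 T) (huv : u ≤ v) :
    |γ v - γ u| ≤ ∫ τ in u..v, |γ' τ| := by
  have h0 : (0 : ℝ) ∈ Set.Icc 0 T := ⟨le_rfl, hu.1.trans hu.2⟩
  have hII : ∀ a ∈ Set.Icc (0 : ℝ) T, ∀ b ∈ Set.Icc (0 : ℝ) T, IntervalIntegrable γ' volume a b :=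
    fun a ha b hb => (hint.mono_set (Set.uIcc_subset_Icc ha hb)).intervalIntegrable
  have hdiff : γ v - γ u = ∫ τ in u..v, γ' τ := by
    rw [hγ v hv, hγ u hu, add_sub_add_left_eq_sub,
      integral_interval_sub_left (hII 0 h0 v hv) (hII 0 h0 u hu)]
  rw [hdiff]
  exact abs_intervalIntegral_le_integral_abs_of_hasSolidNorm huv γ'

variable {X : Type*} [MeasurableSpace X] {μ : Measure X} {p : ENNReal} [Fact (1 ≤ p)]

theorem ae_sum_abs_sub_le_integral_abs {γ γ' : ℝ → Lp ℝ p μ} {T : ℝ}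
    (hint : IntegrableOn γ' (Set.Icc 0 T))
    (hγ : ∀ t ∈ Set.Icc (0 : ℝ) T, γ t = γ 0 + ∫ τ in (0 : ℝ)..t, γ' τ) {γrep : ℝ → X → ℝ}
    (hrep : ∀ t ∈ Set.Icc (0 : ℝ) T, γrep t =ᵐ[μ] γ t) {s t : ℝ} (hs : 0 ≤ s) (ht : t ≤ T)
    {n : ℕ} {a : ℕ → ℝ} (ha0 : a 0 = s) (han : a n = t) (ha : MonotoneOn a (Set.Iic n)) :
    ∀ᵐ x ∂μ, ∑ i ∈ Finset.range n, |γrep (a (i + 1)) x - γrep (a i) x| ≤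
      (∫ τ in s..t, |γ' τ|) x := by
  have hmem : ∀ i ≤ n, a i ∈ Set.Icc 0 T := fun i hi =>
    ⟨hs.trans (ha0 ▸ ha (Nat.zero_le n) hi (Nat.zero_le i)), (han ▸ ha hi (le_refl n) hi).trans ht⟩
  have hII : ∀ i < n, IntervalIntegrable (fun τ => |γ' τ|) volume (a i) (a (i + 1)) :=
    fun i hi => IntegrableOn.intervalIntegrable
      (hint.mono_set (Set.uIcc_subset_Icc (hmem i hi.le) (hmem (i + 1) hi))).abs
  have hincr : ∀ i < n, ∀ᵐ x ∂μ, |γrep (a (i + 1)) x - γrep (a i) x| ≤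
      (∫ τ in a i..a (i + 1), |γ' τ|) x := fun i hi => by
    have hle : a i ≤ a (i + 1) := ha hi.le hi (Nat.le_succ i)
    filter_upwards [Lp.ae_abs_sub_le_of_abs_sub_le (abs_sub_le_integral_abs_of_eq_add_integral
        hint hγ (hmem i hi.le) (hmem (i + 1) hi) hle),
      hrep _ (hmem i hi.le), hrep _ (hmem (i + 1) hi)] with x hx hu hv
    rwa [hu, hv]
  rw [← ha0, ← han]
  exact ae_sum_abs_sub_le_intervalIntegral hII hincr

end AbsolutelyContinuous

section EssVariation

variable {X : Type*} [MeasurableSpace X] {μ : Measure X} {F : ℝ → X → ℝ} {a b : ℝ}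
  {V : X → ENNReal}

theorem IsEssVariation.measurable (hV : IsEssVariation μ F a b V) : Measurable V := by
  simpa only [EReal.toENNReal_coe] using hV.1.ereal_toENNReal

theorem IsEssVariation.ae_le (hV : IsEssVariation μ F a b V) {W : X → ℝ} (hW : AEMeasurable W μ)
    (h : ∀ (n : ℕ) (s : ℕ → ℝ), s 0 = a → s n = b → StrictMonoOn s (Set.Iic n) →
      ∀ᵐ x ∂μ, ∑ i ∈ Finset.range n, |F (s (i + 1)) x - F (s i) x| ≤ W x) :
    ∀ᵐ x ∂μ, (V x : EReal) ≤ W x := by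
  have hmk : ∀ᵐ x ∂μ, (V x : EReal) ≤ hW.mk W x :=
    hV.2.2 _ (measurable_coe_real_ereal.comp hW.measurable_mk) fun ⟨⟨n, s⟩, hs0, hsn, hs⟩ => by
      filter_upwards [h n s hs0 hsn hs, hW.ae_eq_mk] with x hx hWx
      exact EReal.coe_le_coe (hWx ▸ hx)
  filter_upwards [hmk, hW.ae_eq_mk] with x hx hWx
  rwa [hWx]

end EssVariation

theorem ENNReal.le_ofReal_of_coe_le {v : ENNReal} {w : ℝ} (h : (v : EReal) ≤ w) :
    v ≤ ENNReal.ofReal w := by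
  simpa only [EReal.toENNReal_coe, EReal.real_coe_toENNReal] using EReal.toENNReal_le_toENNReal h

theorem ENNReal.norm_toReal_le_of_le_ofReal {v : ENNReal} {w : ℝ} (h : v ≤ ENNReal.ofReal w) :
    ‖v.toReal‖ ≤ ‖w‖ := by
  rw [Real.norm_of_nonneg ENNReal.toReal_nonneg, Real.norm_eq_abs]
  calc v.toReal ≤ (ENNReal.ofReal w).toReal := ENNReal.toReal_mono ENNReal.ofReal_ne_top h
    _ = max w 0 := ENNReal.toReal_ofReal'
    _ ≤ |w| := max_le (le_abs_self w) (abs_nonneg w)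

theorem essVariation_le_integral_abs_deriv_general {X : Type*} [MeasurableSpace X] (μ : Measure X)
    (T : ℝ)
    (γ γ' : ℝ → Lp ℝ 2 μ)
    (hint : IntegrableOn γ' (Set.Icc 0 T))
    (hγ : ∀ t ∈ Set.Icc (0 : ℝ) T, γ t = γ 0 + ∫ τ in (0 : ℝ)..t, γ' τ)
    (γrep : ℝ → X → ℝ)
    (hrep : ∀ t ∈ Set.Icc (0 : ℝ) T, Measurable (γrep t) ∧ γrep t =ᵐ[μ] γ t)
    (s t : ℝ) (hs : 0 ≤ s) (hst : s ≤ t) (ht : t ≤ T)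
    (V : X → ENNReal) (hV : IsEssVariation μ γrep s t V) :
    (∀ G : X → ℝ, G =ᵐ[μ] (↑(∫ τ in s..t, |γ' τ|) : X → ℝ) →
        ∀ᵐ x ∂μ, (V x : EReal) ≤ ((G x : ℝ) : EReal)) ∧
      (∀ᵐ x ∂μ, V x ≠ ⊤) ∧
      MemLp (fun x => (V x).toReal) 2 μ ∧
      eLpNorm (fun x => (V x).toReal) 2 μ ≤ ENNReal.ofReal (∫ τ in s..t, ‖γ' τ‖) := by
  set w : Lp ℝ 2 μ := ∫ τ in s..t, |γ' τ|
  have hVw : ∀ᵐ x ∂μ, (V x : EReal) ≤ w x :=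
    hV.ae_le (Lp.aestronglyMeasurable w).aemeasurable fun _ _ ha0 han ha =>
      ae_sum_abs_sub_le_integral_abs hint hγ (fun τ hτ => (hrep τ hτ).2) hs ht ha0 han
        ha.monotoneOn
  have hVw' : ∀ᵐ x ∂μ, V x ≤ ENNReal.ofReal (w x) := hVw.mono fun _ => ENNReal.le_ofReal_of_coe_le
  have hnorm : ∀ᵐ x ∂μ, ‖(V x).toReal‖ ≤ ‖w x‖ :=
    hVw'.mono fun _ => ENNReal.norm_toReal_le_of_le_ofReal
  refine ⟨fun G hG => ?_, hVw'.mono fun _ => ne_top_of_le_ne_top ENNReal.ofReal_ne_top,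
    (Lp.memLp w).of_le hV.measurable.ennreal_toReal.aestronglyMeasurable hnorm, ?_⟩
  · filter_upwards [hVw, hG] with x hx hGx
    rwa [hGx]
  · calc eLpNorm (fun x => (V x).toReal) 2 μ ≤ eLpNorm w 2 μ := eLpNorm_mono_ae hnorm
      _ = ENNReal.ofReal ‖w‖ := by rw [Lp.norm_def, ENNReal.ofReal_toReal (Lp.eLpNorm_ne_top w)]
      _ ≤ ENNReal.ofReal (∫ τ in s..t, ‖γ' τ‖) := ENNReal.ofReal_le_ofReal <|
          (intervalIntegral.norm_integral_le_integral_norm hst).trans_eq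
            (by simp only [norm_abs_eq_norm])

/-- If `γ : [0, T] → L²(X, μ)` is absolutely continuous with Bochner integrable derivative
`γ'`, `γrep t` is a measurable representative of `γ t` for each `t ∈ [0, T]`, and `V` is an
essential variation of `γrep` over `[s, t] ⊆ [0, T]`, then `V ≤ ∫ₛᵗ |γ'(τ)| dτ` `μ`-a.e.
(for any representative `G` of the Bochner integral `∫ₛᵗ |γ'(τ)| dτ ∈ L²`); in particular
`V` is `μ`-a.e. finite, `V ∈ L²(X, μ)` and `‖V‖_{L²} ≤ ∫ₛᵗ ‖γ'(τ)‖_{L²} dτ`. -/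
theorem essVariation_le_integral_abs_deriv {X : Type*} [MeasurableSpace X] (μ : Measure X)
    [SigmaFinite μ] (T : ℝ) (hT : 0 < T)
    (γ γ' : ℝ → Lp ℝ 2 μ)
    (hint : IntegrableOn γ' (Set.Icc 0 T))
    (hγ : ∀ t ∈ Set.Icc (0 : ℝ) T, γ t = γ 0 + ∫ τ in (0 : ℝ)..t, γ' τ)
    (γrep : ℝ → X → ℝ)
    (hrep : ∀ t ∈ Set.Icc (0 : ℝ) T, Measurable (γrep t) ∧ γrep t =ᵐ[μ] γ t)
    (s t : ℝ) (hs : 0 ≤ s) (hst : s ≤ t) (ht : t ≤ T)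
    (V : X → ENNReal) (hV : IsEssVariation μ γrep s t V) :
    (∀ G : X → ℝ, G =ᵐ[μ] (↑(∫ τ in s..t, |γ' τ|) : X → ℝ) →
        ∀ᵐ x ∂μ, (V x : EReal) ≤ ((G x : ℝ) : EReal)) ∧
      (∀ᵐ x ∂μ, V x ≠ ⊤) ∧
      MemLp (fun x => (V x).toReal) 2 μ ∧
      eLpNorm (fun x => (V x).toReal) 2 μ ≤ ENNReal.ofReal (∫ τ in s..t, ‖γ' τ‖) :=
  essVariation_le_integral_abs_deriv_general μ T γ γ' hint hγ γrep hrep s t hs hst ht V hV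
end

section
/- Let K be a metric space equipped with a finite Borel measure μ, let Ξ be a compact metric space, and let ν_j, ν (j ∈ ℕ) be finite Borel measures on K × Ξ whose first marginal (pushforward under the projection (x, ξ) ↦ x) equals μ. Assume ν_j → ν narrowly, i.e. ∫ f dν_j → ∫ f dν for every bounded continuous f : K × Ξ → ℝ. Then ∫ f dν_j → ∫ f dν also holds for every Carathéodory integrand f, i.e. every Borel function f : K × Ξ → ℝ such that f(x, ·) is continuous on Ξ for μ-a.e. x ∈ K and the function x ↦ sup_{ξ∈Ξ} |f(x, ξ)| belongs to L¹(K, μ). -/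
/-!
Off a `μ`-null set, `x ↦ f (x, ·)` is a Bochner-integrable map `u : K → C(Ξ, ℝ)`, and
`∫ f dρ = ∫ u x ξ dρ(x, ξ)` for every `ρ` with first marginal `μ`. For each such `ρ` the functional
`w ↦ ∫ w x ξ dρ(x, ξ)` is 1-Lipschitz on `L¹(μ; C(Ξ, ℝ))`, so the set of `w` along which narrow
convergence passes to the limit is closed. It is a subspace containing every `1_s ⊗ g`:
approximating `1_s` in `L¹(μ)` by a bounded continuous `φ` turns `φ ⊗ g` into an admissible test
function. Since simple functions are dense, it contains `u`.
-/

open MeasureTheory Filter Topology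
open scoped BoundedContinuousFunction ENNReal

theorem tendsto_of_forall_approx {ι α : Type*} [PseudoMetricSpace α] {l : Filter ι}
    {A : ι → α} {a : α}
    (h : ∀ ε > 0, ∃ (B : ι → α) (b : α),
      Tendsto B l (𝓝 b) ∧ (∀ i, dist (A i) (B i) ≤ ε) ∧ dist a b ≤ ε) :
    Tendsto A l (𝓝 a) := by
  refine Metric.tendsto_nhds.2 fun ε hε => ?_
  obtain ⟨B, b, hB, hAB, hab⟩ := h (ε / 4) (by positivity)
  filter_upwards [Metric.tendsto_nhds.1 hB (ε / 4) (by positivity)] with i hBi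
  calc dist (A i) a ≤ dist (A i) (B i) + dist (B i) b + dist b a := dist_triangle4 _ _ _ _
    _ < ε := by rw [dist_comm b a]; linarith [hAB i]

theorem measurable_of_measurable_dist {α β : Type*} [MeasurableSpace α] [PseudoMetricSpace β]
    [SecondCountableTopology β] [MeasurableSpace β] [BorelSpace β] {u : α → β}
    (h : ∀ y, Measurable fun x => dist (u x) y) : Measurable u := by
  refine measurable_of_isOpen fun U hU => ?_
  let ball : {q : β × ℝ // Metric.ball q.1 q.2 ⊆ U} → Set β := fun q => Metric.ball q.1.1 q.1.2
  obtain ⟨T, hT, hTU⟩ := TopologicalSpace.isOpen_iUnion_countable ball fun _ => Metric.isOpen_ball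
  have hU_eq : U = ⋃ q ∈ T, ball q := by
    rw [hTU]
    refine subset_antisymm (fun y hy => ?_) (Set.iUnion_subset fun q => q.2)
    obtain ⟨r, hr, hrU⟩ := Metric.isOpen_iff.1 hU y hy
    exact Set.mem_iUnion.2 ⟨⟨(y, r), hrU⟩, Metric.mem_ball_self hr⟩
  rw [hU_eq, Set.preimage_iUnion₂]
  exact MeasurableSet.biUnion hT fun q _ => measurableSet_lt (h q.1.1) measurable_const

theorem ContinuousMap.measurable_of_measurable_eval {α Ξ E : Type*} [MeasurableSpace α]
    [MetricSpace Ξ] [CompactSpace Ξ] [NormedAddCommGroup E] [MeasurableSpace E] [BorelSpace E]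
    [SecondCountableTopology E] [MeasurableSpace C(Ξ, E)] [BorelSpace C(Ξ, E)] {u : α → C(Ξ, E)}
    (h : ∀ ξ, Measurable fun x => u x ξ) : Measurable u := by
  obtain ⟨D, hD, hDd⟩ := TopologicalSpace.exists_countable_dense Ξ
  have := hD.to_subtype
  refine measurable_of_measurable_dist fun g => ?_
  have hdist : ∀ x, dist (u x) g = ⨆ d : D, dist (u x d) (g d) := fun x => by
    rw [dist_eq_norm, ContinuousMap.norm_eq_iSup_norm,
      ← hDd.ciSup' (f := fun ξ => ‖(u x - g) ξ‖) (by fun_prop)]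
    simp only [ContinuousMap.sub_apply, dist_eq_norm]
  simp_rw [hdist]
  exact Measurable.iSup fun d => (h d).dist measurable_const

theorem exists_integrable_continuousMap_ae_eq {K Ξ : Type*} [MeasurableSpace K]
    [MetricSpace Ξ] [CompactSpace Ξ] [MeasurableSpace Ξ] {μ : Measure K} {f : K × Ξ → ℝ}
    (hf : Measurable f) (hcont : ∀ᵐ x ∂μ, Continuous fun ξ => f (x, ξ))
    (hint : Integrable (fun x => ⨆ ξ, |f (x, ξ)|) μ) :
    ∃ u : K → C(Ξ, ℝ), Integrable u μ ∧ ∀ᵐ x ∂μ, ∀ ξ, u x ξ = f (x, ξ) := by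
  classical
  obtain ⟨N, hN, hNm, hN0⟩ := exists_measurable_superset_of_null (ae_iff.1 hcont)
  have hcontN : ∀ x ∉ N, Continuous fun ξ => f (x, ξ) := fun x hx => not_not.1 (hx <| hN ·)
  let u : K → C(Ξ, ℝ) := fun x => if hx : x ∈ N then 0 else ⟨_, hcontN x hx⟩
  have hu_apply : ∀ x ξ, u x ξ = if x ∈ N then 0 else f (x, ξ) := fun x ξ => by
    by_cases hx : x ∈ N <;> simp [u, hx]
  let _ : MeasurableSpace C(Ξ, ℝ) := borel _
  have : BorelSpace C(Ξ, ℝ) := ⟨rfl⟩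
  have hu_meas : Measurable u := ContinuousMap.measurable_of_measurable_eval fun ξ => by
    simp_rw [hu_apply]
    exact measurable_const.ite hNm (hf.comp measurable_prodMk_right)
  have hu_norm : ∀ x, ‖u x‖ ≤ ⨆ ξ, |f (x, ξ)| := fun x => by
    by_cases hx : x ∈ N
    · simpa [u, hx] using Real.iSup_nonneg fun ξ => abs_nonneg (f (x, ξ))
    · simp [u, hx, ContinuousMap.norm_eq_iSup_norm]
  refine ⟨u, hint.mono' hu_meas.aestronglyMeasurable (.of_forall hu_norm), ?_⟩
  filter_upwards [measure_eq_zero_iff_ae_notMem.1 hN0] with x hx ξ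
  simp [hu_apply, hx]

theorem MeasureTheory.Integrable.comp_fst_of_map_fst_eq {K Ξ E : Type*} [MeasurableSpace K]
    [MeasurableSpace Ξ] [NormedAddCommGroup E] {μ : Measure K} {ρ : Measure (K × Ξ)}
    (hρ : ρ.map Prod.fst = μ) {G : K → E} (hG : Integrable G μ) :
    Integrable (fun p : K × Ξ => G p.1) ρ := by
  rw [← hρ] at hG
  exact hG.comp_measurable measurable_fst

theorem ae_fst_of_map_fst_eq {K Ξ : Type*} [MeasurableSpace K] [MeasurableSpace Ξ]
    {μ : Measure K} {ρ : Measure (K × Ξ)} (hρ : ρ.map Prod.fst = μ) {P : K → Prop}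
    (h : ∀ᵐ x ∂μ, P x) : ∀ᵐ p ∂ρ, P p.1 :=
  ae_of_ae_map measurable_fst.aemeasurable (hρ ▸ h)

theorem integral_congr_of_ae_fst {K Ξ E : Type*} [MeasurableSpace K] [MeasurableSpace Ξ]
    [NormedAddCommGroup E] [NormedSpace ℝ E] {μ : Measure K} {ρ : Measure (K × Ξ)}
    (hρ : ρ.map Prod.fst = μ) {F G : K × Ξ → E} (h : ∀ᵐ x ∂μ, ∀ ξ, F (x, ξ) = G (x, ξ)) :
    ∫ p, F p ∂ρ = ∫ p, G p ∂ρ :=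
  integral_congr_ae <| (ae_fst_of_map_fst_eq hρ h).mono fun p hp => hp p.2

section Marginal

variable {K Ξ : Type*} [MeasurableSpace K] [MetricSpace Ξ] [CompactSpace Ξ] [MeasurableSpace Ξ]
  {μ : Measure K} {ρ : Measure (K × Ξ)}

theorem norm_integral_uncurry_le (hρ : ρ.map Prod.fst = μ) {w : K → C(Ξ, ℝ)}
    (hw : Integrable w μ) : ‖∫ p, w p.1 p.2 ∂ρ‖ ≤ ∫ x, ‖w x‖ ∂μ := by
  calc ‖∫ p, w p.1 p.2 ∂ρ‖ ≤ ∫ p, ‖w p.1‖ ∂ρ :=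
        norm_integral_le_of_norm_le (hw.norm.comp_fst_of_map_fst_eq hρ)
          (.of_forall fun p => (w p.1).norm_coe_le_norm p.2)
    _ = ∫ x, ‖w x‖ ∂μ := by
        rw [← hρ, integral_map measurable_fst.aemeasurable (hρ ▸ hw.norm.aestronglyMeasurable)]

variable [OpensMeasurableSpace Ξ]

theorem MeasureTheory.Integrable.uncurry_continuousMap (hρ : ρ.map Prod.fst = μ) {w : K → C(Ξ, ℝ)}
    (hw : Integrable w μ) : Integrable (fun p : K × Ξ => w p.1 p.2) ρ := by
  obtain ⟨w', hw'_meas, hww'⟩ := hw.aestronglyMeasurable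
  have h_meas : StronglyMeasurable fun p : K × Ξ => w' p.1 p.2 :=
    continuous_eval.comp_stronglyMeasurable
      ((hw'_meas.comp_measurable measurable_fst).prodMk measurable_snd.stronglyMeasurable)
  have h_ae : ∀ᵐ p ∂ρ, w p.1 p.2 = w' p.1 p.2 := by
    filter_upwards [ae_fst_of_map_fst_eq hρ hww'] with p hp
    rw [hp]
  refine (hw.norm.comp_fst_of_map_fst_eq hρ).mono' ⟨_, h_meas, h_ae⟩ (.of_forall fun p => ?_)
  exact (w p.1).norm_coe_le_norm p.2

theorem abs_integral_uncurry_sub_le (hρ : ρ.map Prod.fst = μ) {v v' : K → C(Ξ, ℝ)}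
    (hv : Integrable v μ) (hv' : Integrable v' μ) :
    |∫ p, v p.1 p.2 ∂ρ - ∫ p, v' p.1 p.2 ∂ρ| ≤ ∫ x, ‖v x - v' x‖ ∂μ := by
  rw [← integral_sub (hv.uncurry_continuousMap hρ) (hv'.uncurry_continuousMap hρ)]
  exact norm_integral_uncurry_le hρ (hv.sub hv')

theorem lipschitzWith_one_integral_uncurry (hρ : ρ.map Prod.fst = μ) :
    LipschitzWith 1 fun v : K →₁[μ] C(Ξ, ℝ) => ∫ p, v p.1 p.2 ∂ρ :=
  .of_dist_le_mul fun v v' => by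
    rw [Real.dist_eq, NNReal.coe_one, one_mul, L1.dist_eq_integral_dist]
    simpa only [dist_eq_norm] using
      abs_integral_uncurry_sub_le hρ (L1.integrable_coeFn v) (L1.integrable_coeFn v')

end Marginal

section NarrowConvergence

variable {K Ξ ι : Type*} [TopologicalSpace K] [NormalSpace K] [MeasurableSpace K] [BorelSpace K]
  [MetricSpace Ξ] [CompactSpace Ξ] [MeasurableSpace Ξ] [OpensMeasurableSpace Ξ]
  {μ : Measure K} {l : Filter ι} {ν : ι → Measure (K × Ξ)} {νlim : Measure (K × Ξ)}
  (hmarg : ∀ i, (ν i).map Prod.fst = μ) (hmarglim : νlim.map Prod.fst = μ)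
  (hnarrow : ∀ f : K × Ξ →ᵇ ℝ, Tendsto (fun i => ∫ p, f p ∂(ν i)) l (𝓝 (∫ p, f p ∂νlim)))
include hmarg hmarglim hnarrow

theorem tendsto_integral_uncurry_indicator [μ.WeaklyRegular] (g : C(Ξ, ℝ)) {s : Set K}
    (hs : MeasurableSet s) (hμs : μ s < ∞) :
    Tendsto (fun i => ∫ p, s.indicator (fun _ => g) p.1 p.2 ∂(ν i)) l
      (𝓝 (∫ p, s.indicator (fun _ => g) p.1 p.2 ∂νlim)) := by
  have h_one : Integrable (s.indicator fun _ => (1 : ℝ)) μ :=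
    (integrableOn_const (C := (1 : ℝ)) hμs.ne).integrable_indicator hs
  have h_ind : Integrable (s.indicator fun _ => g) μ :=
    (integrableOn_const (C := g) hμs.ne).integrable_indicator hs
  refine tendsto_of_forall_approx fun ε hε => ?_
  obtain ⟨φ, hφ, hφ_int⟩ :=
    h_one.exists_boundedContinuous_integral_sub_le (ε := ε / (‖g‖ + 1)) (by positivity)
  let b : K × Ξ →ᵇ ℝ := φ.compContinuous ⟨Prod.fst, continuous_fst⟩ *
    (BoundedContinuousFunction.mkOfCompact g).compContinuous ⟨Prod.snd, continuous_snd⟩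
  have h_dist : ∀ ρ : Measure (K × Ξ), ρ.map Prod.fst = μ →
      dist (∫ p, s.indicator (fun _ => g) p.1 p.2 ∂ρ) (∫ p, b p ∂ρ) ≤ ε := fun ρ hρ => by
    have h_norm : ∀ x, ‖s.indicator (fun _ => g) x - φ x • g‖ =
        ‖s.indicator (fun _ => (1 : ℝ)) x - φ x‖ * ‖g‖ := fun x => by
      rw [← norm_smul, sub_smul]
      by_cases hx : x ∈ s <;> simp [hx]
    calc dist (∫ p, s.indicator (fun _ => g) p.1 p.2 ∂ρ) (∫ p, b p ∂ρ)
        ≤ ∫ x, ‖s.indicator (fun _ => g) x - φ x • g‖ ∂μ :=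
          abs_integral_uncurry_sub_le hρ h_ind (hφ_int.smul_const g)
      _ = (∫ x, ‖s.indicator (fun _ => (1 : ℝ)) x - φ x‖ ∂μ) * ‖g‖ := by
          simp_rw [h_norm, integral_mul_const]
      _ ≤ ε / (‖g‖ + 1) * (‖g‖ + 1) := by gcongr; linarith
      _ = ε := div_mul_cancel₀ ε (by positivity)
  exact ⟨_, _, hnarrow b, fun i => h_dist _ (hmarg i), h_dist _ hmarglim⟩

theorem tendsto_integral_uncurry_of_integrable [μ.WeaklyRegular] {w : K → C(Ξ, ℝ)}
    (hw : Integrable w μ) :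
    Tendsto (fun i => ∫ p, w p.1 p.2 ∂(ν i)) l (𝓝 (∫ p, w p.1 p.2 ∂νlim)) := by
  refine Integrable.induction (P := fun w : K → C(Ξ, ℝ) =>
      Tendsto (fun i => ∫ p, w p.1 p.2 ∂(ν i)) l (𝓝 (∫ p, w p.1 p.2 ∂νlim))) ?_ ?_ ?_ ?_ hw
  · exact tendsto_integral_uncurry_indicator hmarg hmarglim hnarrow
  · intro v v' _ hv hv' hP hP'
    have h_add : ∀ ρ : Measure (K × Ξ), ρ.map Prod.fst = μ → ∫ p, (v + v') p.1 p.2 ∂ρ =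
        ∫ p, v p.1 p.2 ∂ρ + ∫ p, v' p.1 p.2 ∂ρ := fun ρ hρ =>
      integral_add (hv.uncurry_continuousMap hρ) (hv'.uncurry_continuousMap hρ)
    simpa only [h_add _ (hmarg _), h_add _ hmarglim] using hP.add hP'
  · exact (LipschitzWith.uniformEquicontinuous _ 1 fun i =>
      lipschitzWith_one_integral_uncurry (hmarg i)).equicontinuous.isClosed_setOfPred_tendsto
        (lipschitzWith_one_integral_uncurry hmarglim).continuous
  · intro v v' hvv' _ hP
    have h_congr : ∀ ρ : Measure (K × Ξ), ρ.map Prod.fst = μ →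
        ∫ p, v p.1 p.2 ∂ρ = ∫ p, v' p.1 p.2 ∂ρ := fun ρ hρ =>
      integral_congr_of_ae_fst hρ (hvv'.mono fun x hx ξ => by rw [hx])
    simpa only [h_congr _ (hmarg _), h_congr _ hmarglim] using hP

end NarrowConvergence

theorem narrow_convergence_caratheodory_general
    {K Ξ : Type*} [MetricSpace K] [MeasurableSpace K] [BorelSpace K]
    [MetricSpace Ξ] [CompactSpace Ξ] [MeasurableSpace Ξ] [BorelSpace Ξ]
    (μ : Measure K) [IsFiniteMeasure μ]
    (ν : ℕ → Measure (K × Ξ)) (νlim : Measure (K × Ξ))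
    (hmarg : ∀ j, (ν j).map Prod.fst = μ) (hmarglim : νlim.map Prod.fst = μ)
    (hnarrow : ∀ f : K × Ξ →ᵇ ℝ,
      Tendsto (fun j => ∫ p, f p ∂(ν j)) atTop (nhds (∫ p, f p ∂νlim)))
    (f : K × Ξ → ℝ) (hf : Measurable f)
    (hcont : ∀ᵐ x ∂μ, Continuous fun ξ => f (x, ξ))
    (hint : Integrable (fun x => ⨆ ξ, |f (x, ξ)|) μ) :
    Tendsto (fun j => ∫ p, f p ∂(ν j)) atTop (nhds (∫ p, f p ∂νlim)) := by
  obtain ⟨u, hu, hfu⟩ := exists_integrable_continuousMap_ae_eq hf hcont hint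
  have h_congr : ∀ ρ : Measure (K × Ξ), ρ.map Prod.fst = μ →
      ∫ p, f p ∂ρ = ∫ p, u p.1 p.2 ∂ρ := fun ρ hρ =>
    integral_congr_of_ae_fst hρ (hfu.mono fun x hx ξ => (hx ξ).symm)
  simpa only [h_congr _ (hmarg _), h_congr _ hmarglim] using
    tendsto_integral_uncurry_of_integrable hmarg hmarglim hnarrow hu

/-- If Young measures `ν_j` on `K × Ξ` (finite Borel measures with first marginal `μ`,
`Ξ` a compact metric space) converge narrowly to `ν`, then `∫ f dν_j → ∫ f dν` also holds
for every Carathéodory integrand `f`, i.e. every Borel `f : K × Ξ → ℝ` such that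
`f(x, ·)` is continuous for `μ`-a.e. `x` and `x ↦ sup_ξ |f(x, ξ)|` belongs to `L¹(μ)`. -/
theorem narrow_convergence_caratheodory
    {K Ξ : Type*} [MetricSpace K] [MeasurableSpace K] [BorelSpace K]
    [MetricSpace Ξ] [CompactSpace Ξ] [MeasurableSpace Ξ] [BorelSpace Ξ]
    (μ : Measure K) [IsFiniteMeasure μ]
    (ν : ℕ → Measure (K × Ξ)) (νlim : Measure (K × Ξ))
    [∀ j, IsFiniteMeasure (ν j)] [IsFiniteMeasure νlim]
    (hmarg : ∀ j, (ν j).map Prod.fst = μ) (hmarglim : νlim.map Prod.fst = μ)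
    (hnarrow : ∀ f : K × Ξ →ᵇ ℝ,
      Tendsto (fun j => ∫ p, f p ∂(ν j)) atTop (nhds (∫ p, f p ∂νlim)))
    (f : K × Ξ → ℝ) (hf : Measurable f)
    (hcont : ∀ᵐ x ∂μ, Continuous fun ξ => f (x, ξ))
    (hint : Integrable (fun x => ⨆ ξ, |f (x, ξ)|) μ) :
    Tendsto (fun j => ∫ p, f p ∂(ν j)) atTop (nhds (∫ p, f p ∂νlim)) :=
  narrow_convergence_caratheodory_general μ ν νlim hmarg hmarglim hnarrow f hf hcont hint
end

section
/- Let K be a compact metric space equipped with a finite Borel measure μ, let T > 0, and let t ↦ ν(t) be a map from [0, T] to the set of Young measures on K × [0, 1] relative to μ which is nondecreasing with respect to the order ≼. Then there exists an at most countable set E ⊂ [0, T] such that t ↦ ν(t) is continuous with respect to the narrow topology at every t ∈ [0, T] ∖ E; that is, for every t ∈ [0, T] ∖ E and every sequence s_n → t in [0, T], the measures ν(s_n) converge narrowly to ν(t). -/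
/-!
A test function `g(x, ξ)` that is `L`-Lipschitz in `ξ` is the difference of `g + Lξ` and `Lξ`,
both nondecreasing in `ξ`, so `t ↦ ∫ g dν(t)` is a difference of monotone functions and is
continuous outside a countable set. By Stone–Weierstrass such `g` are dense in `C(K × [0, 1])`;
let `E` collect the discontinuities for a countable dense family of them. All `ν(t)` have mass
`μ(K)`, so the functionals `g ↦ ∫ g dν(t)` are equi-Lipschitz and convergence on the dense family
propagates to every bounded continuous `f`.
-/

open MeasureTheory Filter
open scoped BoundedContinuousFunction

/-- The partial order `ν₁ ≼ ν₂` on Young measures on `K × [0, 1]`: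
`∫ f dν₁ ≤ ∫ f dν₂` for every bounded Borel `f : K × [0, 1] → ℝ` such that `f(x, ·)` is
continuous and nondecreasing on `[0, 1]` for every `x ∈ K`. -/
def YoungLE {K : Type*} [MeasurableSpace K] [TopologicalSpace K]
    (ν₁ ν₂ : Measure (K × Set.Icc (0 : ℝ) 1)) : Prop :=
  ∀ f : K × Set.Icc (0 : ℝ) 1 → ℝ, Measurable f → (∃ C, ∀ p, |f p| ≤ C) →
    (∀ x : K, Continuous fun ξ : Set.Icc (0 : ℝ) 1 => f (x, ξ)) →
    (∀ x : K, Monotone fun ξ : Set.Icc (0 : ℝ) 1 => f (x, ξ)) →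
    ∫ p, f p ∂ν₁ ≤ ∫ p, f p ∂ν₂

open Set Topology
open scoped NNReal

section UniformlyLipschitzInSnd

def uniformlyLipschitzInSnd (X Y : Type*) [TopologicalSpace X] [MetricSpace Y]
    [CompactSpace (X × Y)] : Subalgebra ℝ C(X × Y, ℝ) where
  carrier := {f | ∃ L : ℝ, ∀ x y y', |f (x, y) - f (x, y')| ≤ L * dist y y'}
  mul_mem' := by
    rintro f g ⟨Lf, hf⟩ ⟨Lg, hg⟩
    refine ⟨‖f‖ * Lg + ‖g‖ * Lf, fun x y y' => ?_⟩
    calc |f (x, y) * g (x, y) - f (x, y') * g (x, y')|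
        = |f (x, y) * (g (x, y) - g (x, y')) + g (x, y') * (f (x, y) - f (x, y'))| := by
          ring_nf
      _ ≤ |f (x, y)| * |g (x, y) - g (x, y')| + |g (x, y')| * |f (x, y) - f (x, y')| := by
          rw [← abs_mul, ← abs_mul]; exact abs_add_le _ _
      _ ≤ ‖f‖ * (Lg * dist y y') + ‖g‖ * (Lf * dist y y') := by
          gcongr
          · exact f.norm_coe_le_norm _
          · exact hg x y y'
          · exact g.norm_coe_le_norm _
          · exact hf x y y'
      _ = (‖f‖ * Lg + ‖g‖ * Lf) * dist y y' := by ring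
  add_mem' := by
    rintro f g ⟨Lf, hf⟩ ⟨Lg, hg⟩
    refine ⟨Lf + Lg, fun x y y' => ?_⟩
    calc |f (x, y) + g (x, y) - (f (x, y') + g (x, y'))|
        = |(f (x, y) - f (x, y')) + (g (x, y) - g (x, y'))| := by ring_nf
      _ ≤ Lf * dist y y' + Lg * dist y y' :=
          (abs_add_le _ _).trans (add_le_add (hf x y y') (hg x y y'))
      _ = (Lf + Lg) * dist y y' := by ring
  algebraMap_mem' c := ⟨0, fun x y y' => by simp⟩

variable (X Y : Type*) [MetricSpace X] [CompactSpace X] [MetricSpace Y] [CompactSpace Y]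

theorem dense_uniformlyLipschitzInSnd :
    Dense (uniformlyLipschitzInSnd X Y : Set C(X × Y, ℝ)) := by
  rw [dense_iff_closure_eq, ← Subalgebra.topologicalClosure_coe,
    ContinuousMap.subalgebra_topologicalClosure_eq_top_of_separatesPoints _ ?_, Algebra.coe_top]
  rintro ⟨x, y⟩ ⟨x', y'⟩ hne
  by_cases hx : x = x'
  · refine ⟨_, ⟨⟨fun p => dist p.2 y, by fun_prop⟩, ⟨1, fun _ z z' => ?_⟩, rfl⟩, ?_⟩
    · simpa using abs_dist_sub_le z z' y
    · subst hx
      simpa [eq_comm] using hne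
  · refine ⟨_, ⟨⟨fun p => dist p.1 x, by fun_prop⟩, ⟨0, fun _ _ _ => by simp⟩, rfl⟩, ?_⟩
    simpa [eq_comm] using hx

theorem exists_countable_dense_subset_uniformlyLipschitzInSnd :
    ∃ D ⊆ (uniformlyLipschitzInSnd X Y : Set C(X × Y, ℝ)), D.Countable ∧ Dense D := by
  obtain ⟨D, hDA, hDc, hAD⟩ := (TopologicalSpace.IsSeparable.of_separableSpace
    (uniformlyLipschitzInSnd X Y : Set C(X × Y, ℝ))).exists_countable_dense_subset
  exact ⟨D, hDA, hDc, dense_closure.1 ((dense_uniformlyLipschitzInSnd X Y).mono hAD)⟩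

end UniformlyLipschitzInSnd

theorem monotone_add_mul_of_abs_sub_le {X : Type*} [TopologicalSpace X] {L : ℝ}
    {f : C(X × Icc (0 : ℝ) 1, ℝ)}
    (hf : ∀ x ξ ξ', |f (x, ξ) - f (x, ξ')| ≤ L * dist ξ ξ') (x : X) :
    Monotone fun ξ : Icc (0 : ℝ) 1 => f (x, ξ) + L * ξ := by
  intro ξ ξ' h
  have h' : (ξ : ℝ) ≤ ξ' := h
  have := (abs_le.1 (hf x ξ ξ')).2
  rw [Subtype.dist_eq, Real.dist_eq, abs_of_nonpos (by linarith)] at this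
  dsimp only
  linarith

section Integral

variable {X : Type*} [TopologicalSpace X] [CompactSpace X] [MeasurableSpace X]
  [OpensMeasurableSpace X]

theorem ContinuousMap.integrable (g : C(X, ℝ)) (μ : Measure X) [IsFiniteMeasure μ] :
    Integrable g μ :=
  (BoundedContinuousFunction.mkOfCompact g).integrable μ

theorem lipschitzWith_integral_continuousMap {μ : Measure X} {C : ℝ≥0} (hμ : μ univ ≤ C) :
    LipschitzWith C fun g : C(X, ℝ) => ∫ x, g x ∂μ := by
  have : IsFiniteMeasure μ := ⟨hμ.trans_lt ENNReal.coe_lt_top⟩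
  refine LipschitzWith.of_dist_le_mul fun g h => ?_
  rw [Real.dist_eq, dist_eq_norm, ← integral_sub (g.integrable μ) (h.integrable μ)]
  calc ‖∫ x, (g - h) x ∂μ‖ ≤ μ.real univ * ‖g - h‖ := by
        simpa only [BoundedContinuousFunction.norm_mkOfCompact,
          BoundedContinuousFunction.mkOfCompact_apply] using
          (BoundedContinuousFunction.mkOfCompact (g - h)).norm_integral_le_mul_norm μ
    _ ≤ C * ‖g - h‖ := by
        gcongr
        exact ENNReal.toReal_le_of_le_ofReal C.coe_nonneg (by simpa using hμ)

theorem isClosed_setOf_tendsto_integral {ι : Type*} {l : Filter ι} {μs : ι → Measure X}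
    {μ : Measure X} {C : ℝ≥0} (hμs : ∀ i, μs i univ ≤ C) (hμ : μ univ ≤ C) :
    IsClosed {g : C(X, ℝ) | Tendsto (fun i => ∫ x, g x ∂μs i) l (𝓝 (∫ x, g x ∂μ))} :=
  (LipschitzWith.uniformEquicontinuous _ C fun i =>
    lipschitzWith_integral_continuousMap (hμs i)).equicontinuous.isClosed_setOfPred_tendsto
      (lipschitzWith_integral_continuousMap hμ).continuous

end Integral

section YoungMeasure

variable {K : Type*} [TopologicalSpace K] [CompactSpace K] [MeasurableSpace K]
  [OpensMeasurableSpace K] {ν : ℝ → Measure (K × Icc (0 : ℝ) 1)} {I : Set ℝ}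

theorem monotoneOn_integral_of_youngLE (hν : ∀ s ∈ I, ∀ t ∈ I, s ≤ t → YoungLE (ν s) (ν t))
    {h : C(K × Icc (0 : ℝ) 1, ℝ)} (hh : ∀ x, Monotone fun ξ => h (x, ξ)) :
    MonotoneOn (fun t => ∫ p, h p ∂ν t) I := fun s hs t ht hst =>
  hν s hs t ht hst h h.continuous.measurable ⟨‖h‖, h.norm_coe_le_norm⟩
    (fun x => h.continuous.comp (Continuous.prodMk_right x)) hh

theorem countable_not_continuousWithinAt_integral
    (hν : ∀ s ∈ I, ∀ t ∈ I, s ≤ t → YoungLE (ν s) (ν t)) (hfin : ∀ t ∈ I, IsFiniteMeasure (ν t))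
    {g : C(K × Icc (0 : ℝ) 1, ℝ)} (hg : g ∈ uniformlyLipschitzInSnd K (Icc (0 : ℝ) 1)) :
    {t ∈ I | ¬ContinuousWithinAt (fun t => ∫ p, g p ∂ν t) I t}.Countable := by
  obtain ⟨L, hL⟩ := hg
  let ξ : C(K × Icc (0 : ℝ) 1, ℝ) := ⟨fun p => p.2, by fun_prop⟩
  have hξ := monotoneOn_integral_of_youngLE hν (h := ξ) fun _ => Subtype.mono_coe _
  have hgξ := monotoneOn_integral_of_youngLE hν (h := g + L • ξ)
    (monotone_add_mul_of_abs_sub_le hL)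
  have hsplit : ∀ t ∈ I, ∫ p, g p ∂ν t = ∫ p, (g + L • ξ) p ∂ν t - L * ∫ p, ξ p ∂ν t := by
    intro t ht
    have := hfin t ht
    rw [ContinuousMap.coe_add, Pi.add_def, integral_add (g.integrable _) ((L • ξ).integrable _)]
    simp [integral_const_mul]
  refine (hgξ.countable_not_continuousWithinAt.union hξ.countable_not_continuousWithinAt).mono ?_
  rintro t ⟨ht, hdisc⟩
  by_contra hcont
  simp only [mem_union, mem_ofPred_eq, not_or, not_and, not_not] at hcont
  exact hdisc <| ((hcont.1 ht).sub ((hcont.2 ht).const_mul L)).congr hsplit (hsplit t ht)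

end YoungMeasure

theorem monotone_young_measures_continuous_outside_countable_general
    {K : Type*} [MetricSpace K] [CompactSpace K] [MeasurableSpace K] [BorelSpace K]
    (μ : Measure K) [IsFiniteMeasure μ] (T : ℝ)
    (ν : ℝ → Measure (K × Set.Icc (0 : ℝ) 1))
    (hmarg : ∀ t ∈ Set.Icc (0 : ℝ) T, (ν t).map Prod.fst = μ)
    (hmono : ∀ s ∈ Set.Icc (0 : ℝ) T, ∀ t ∈ Set.Icc (0 : ℝ) T, s ≤ t →
      YoungLE (ν s) (ν t)) :
    ∃ E : Set ℝ, E.Countable ∧ E ⊆ Set.Icc (0 : ℝ) T ∧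
      ∀ t ∈ Set.Icc (0 : ℝ) T \ E, ∀ s : ℕ → ℝ,
        (∀ n, s n ∈ Set.Icc (0 : ℝ) T) → Tendsto s atTop (nhds t) →
          ∀ f : K × Set.Icc (0 : ℝ) 1 →ᵇ ℝ,
            Tendsto (fun n => ∫ p, f p ∂(ν (s n))) atTop (nhds (∫ p, f p ∂(ν t))) := by
  have hmass : ∀ t ∈ Icc (0 : ℝ) T, ν t univ = (μ univ).toNNReal := fun t ht => by
    rw [ENNReal.coe_toNNReal (measure_ne_top μ univ), ← hmarg t ht,
      Measure.map_apply measurable_fst MeasurableSet.univ, preimage_univ]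
  have hfin : ∀ t ∈ Icc (0 : ℝ) T, IsFiniteMeasure (ν t) := fun t ht =>
    ⟨by simp [hmass t ht]⟩
  obtain ⟨D, hDA, hDc, hDd⟩ :=
    exists_countable_dense_subset_uniformlyLipschitzInSnd K (Icc (0 : ℝ) 1)
  refine ⟨⋃ g ∈ D, {t ∈ Icc 0 T | ¬ContinuousWithinAt (fun t => ∫ p, g p ∂ν t) (Icc 0 T) t},
    hDc.biUnion fun g hg => countable_not_continuousWithinAt_integral hmono hfin (hDA hg),
    iUnion₂_subset fun _ _ => sep_subset _ _, ?_⟩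
  rintro t ⟨ht, htE⟩ s hs hst f
  have hsI : Tendsto s atTop (𝓝[Icc 0 T] t) := tendsto_nhdsWithin_iff.2 ⟨hst, .of_forall hs⟩
  have hD : D ⊆ {g | Tendsto (fun n => ∫ p, g p ∂ν (s n)) atTop (𝓝 (∫ p, g p ∂ν t))} :=
    fun g hg => (not_not.1 fun hcont => htE (mem_biUnion hg ⟨ht, hcont⟩)).tendsto.comp hsI
  have hclosed := isClosed_setOf_tendsto_integral (l := atTop)
    (fun n => (hmass (s n) (hs n)).le) (hmass t ht).le
  exact hclosed.closure_subset_iff.2 hD (hDd.closure_eq ▸ mem_univ f.toContinuousMap)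

/-- A map `t ↦ ν(t)` from `[0, T]` to the Young measures on `K × [0, 1]` relative to `μ`,
nondecreasing with respect to `≼`, is continuous for the narrow topology outside an at
most countable set `E ⊆ [0, T]`. -/
theorem monotone_young_measures_continuous_outside_countable
    {K : Type*} [MetricSpace K] [CompactSpace K] [MeasurableSpace K] [BorelSpace K]
    (μ : Measure K) [IsFiniteMeasure μ] (T : ℝ) (hT : 0 < T)
    (ν : ℝ → Measure (K × Set.Icc (0 : ℝ) 1))
    (hmarg : ∀ t ∈ Set.Icc (0 : ℝ) T, (ν t).map Prod.fst = μ)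
    (hmono : ∀ s ∈ Set.Icc (0 : ℝ) T, ∀ t ∈ Set.Icc (0 : ℝ) T, s ≤ t →
      YoungLE (ν s) (ν t)) :
    ∃ E : Set ℝ, E.Countable ∧ E ⊆ Set.Icc (0 : ℝ) T ∧
      ∀ t ∈ Set.Icc (0 : ℝ) T \ E, ∀ s : ℕ → ℝ,
        (∀ n, s n ∈ Set.Icc (0 : ℝ) T) → Tendsto s atTop (nhds t) →
          ∀ f : K × Set.Icc (0 : ℝ) 1 →ᵇ ℝ,
            Tendsto (fun n => ∫ p, f p ∂(ν (s n))) atTop (nhds (∫ p, f p ∂(ν t))) :=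
  monotone_young_measures_continuous_outside_countable_general μ T ν hmarg hmono
end

section
/- Let (X, μ) be a finite measure space and let κ₁, κ₂ be Markov kernels from X to ℝ, with associated Young measures ν_i = μ ⊗ κ_i on X × ℝ (i.e. ν_i(A × B) = ∫_A κ_i(x)(B) dμ(x) for Borel sets A ⊆ X, B ⊆ ℝ). Then the following are equivalent: (i) for every bounded measurable function f : X × ℝ → ℝ such that f(x, ·) is continuous and nondecreasing for every x ∈ X, one has ∫ f dν₁ ≤ ∫ f dν₂; (ii) for μ-a.e. x ∈ X, the cumulative distribution functions satisfy κ₁(x)((−∞, ξ]) ≥ κ₂(x)((−∞, ξ]) for every ξ ∈ ℝ. -/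
/-!
(ii) ⇒ (i): disintegrate `∫ f d(μ ⊗ κᵢ)` as `∫ ∫ f(x, ·) dκᵢ(x) dμ`. For fixed `x` and
`h = f(x, ·)` shifted to be nonnegative, the layer-cake formula writes `∫ h dκᵢ(x)` as an integral
of the masses of the superlevel sets `{h > t}`; these are complements of closed lower sets
`∅`, `ℝ` or `(-∞, c]`, so the CDF comparison gives `κ₁(x){h > t} ≤ κ₂(x){h > t}`.

(i) ⇒ (ii): testing with `f = 1_{A × ℝ} · g(ξ)` for every measurable `A` gives
`∫ g dκ₁(x) ≤ ∫ g dκ₂(x)` for a.e. `x`, simultaneously for the countably many continuous ramps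
`g` approximating the indicators of `(r, ∞)`, `r ∈ ℚ`. In the limit the CDFs compare at rational
points, and right continuity extends this to all of `ℝ`.
-/

open MeasureTheory ProbabilityTheory Set Filter Topology

section Dominance

variable {p q : Measure ℝ} [IsProbabilityMeasure p] [IsProbabilityMeasure q]

lemma measure_le_of_cdf_le_of_isClosed_of_isLowerSet (hcdf : ∀ ξ, q (Iic ξ) ≤ p (Iic ξ))
    {L : Set ℝ} (hclosed : IsClosed L) (hlower : IsLowerSet L) : q L ≤ p L := by
  rcases L.eq_empty_or_nonempty with rfl | hne
  · simp
  by_cases hbdd : BddAbove L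
  · have hL : L = Iic (sSup L) :=
      Subset.antisymm (fun x hx => le_csSup hbdd hx)
        fun x hx => hlower hx (hclosed.csSup_mem hne hbdd)
    rw [hL]
    exact hcdf _
  · have hL : L = univ := eq_univ_of_forall fun x => by
      obtain ⟨y, hy, hxy⟩ := not_bddAbove_iff.1 hbdd x
      exact hlower hxy.le hy
    simp [hL]

lemma measure_lt_le_of_cdf_le (hcdf : ∀ ξ, q (Iic ξ) ≤ p (Iic ξ)) {g : ℝ → ℝ}
    (hc : Continuous g) (hm : Monotone g) (t : ℝ) :
    p {ξ | t < g ξ} ≤ q {ξ | t < g ξ} := by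
  have hclosed : IsClosed {ξ | g ξ ≤ t} := isClosed_le hc continuous_const
  have hlower : IsLowerSet {ξ | g ξ ≤ t} := fun _ _ hab hb => (hm hab).trans hb
  have hcompl : {ξ | t < g ξ} = {ξ | g ξ ≤ t}ᶜ := by ext; simp
  rw [hcompl, prob_compl_eq_one_sub hclosed.measurableSet,
    prob_compl_eq_one_sub hclosed.measurableSet]
  exact tsub_le_tsub_left (measure_le_of_cdf_le_of_isClosed_of_isLowerSet hcdf hclosed hlower) 1

lemma lintegral_le_of_cdf_le (hcdf : ∀ ξ, q (Iic ξ) ≤ p (Iic ξ)) {g : ℝ → ℝ} (hg : 0 ≤ g)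
    (hc : Continuous g) (hm : Monotone g) :
    ∫⁻ ξ, ENNReal.ofReal (g ξ) ∂p ≤ ∫⁻ ξ, ENNReal.ofReal (g ξ) ∂q := by
  rw [lintegral_eq_lintegral_meas_lt p (ae_of_all _ hg) hc.aemeasurable,
    lintegral_eq_lintegral_meas_lt q (ae_of_all _ hg) hc.aemeasurable]
  exact lintegral_mono fun t => measure_lt_le_of_cdf_le hcdf hc hm t

lemma integral_le_of_cdf_le (hcdf : ∀ ξ, q (Iic ξ) ≤ p (Iic ξ)) {h : ℝ → ℝ}
    (hc : Continuous h) (hm : Monotone h) {C : ℝ} (hC : ∀ ξ, |h ξ| ≤ C) :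
    ∫ ξ, h ξ ∂p ≤ ∫ ξ, h ξ ∂q := by
  have hint : ∀ (r : Measure ℝ) [IsProbabilityMeasure r], Integrable h r := fun r _ =>
    Integrable.of_bound hc.aestronglyMeasurable C (ae_of_all _ hC)
  have hshift : 0 ≤ fun ξ => h ξ + C := fun ξ => show 0 ≤ h ξ + C by
    linarith [neg_abs_le (h ξ), hC ξ]
  have hint_shift (r : Measure ℝ) [IsProbabilityMeasure r] : Integrable (fun ξ => h ξ + C) r :=
    (hint r).add (integrable_const C)
  have key : ∫ ξ, h ξ + C ∂p ≤ ∫ ξ, h ξ + C ∂q := by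
    rw [integral_eq_lintegral_of_nonneg_ae (ae_of_all _ hshift) (hint_shift p).1,
      integral_eq_lintegral_of_nonneg_ae (ae_of_all _ hshift) (hint_shift q).1]
    exact ENNReal.toReal_mono (hint_shift q).lintegral_lt_top.ne
      (lintegral_le_of_cdf_le hcdf hshift (hc.add continuous_const) (hm.add_const C))
  simpa [integral_add (hint p) (integrable_const C), integral_add (hint q) (integrable_const C)]
    using key

end Dominance

lemma StieltjesFunction.le_of_forall_rat_le {f g : StieltjesFunction ℝ}
    (h : ∀ r : ℚ, f r ≤ g r) (x : ℝ) : f x ≤ g x := by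
  rw [← f.iInf_rat_gt_eq, ← g.iInf_rat_gt_eq]
  exact ciInf_mono ⟨f x, by rintro _ ⟨r, rfl⟩; exact f.mono r.2.le⟩ fun r => h r

noncomputable def ramp (a : ℝ) (n : ℕ) (ξ : ℝ) : ℝ := min 1 (max 0 (n * (ξ - a)))

lemma continuous_ramp (a : ℝ) (n : ℕ) : Continuous (ramp a n) := by
  unfold ramp; fun_prop

lemma monotone_ramp (a : ℝ) (n : ℕ) : Monotone (ramp a n) := fun ξ η hξη => by
  unfold ramp; gcongr

lemma abs_ramp_le_one (a : ℝ) (n : ℕ) (ξ : ℝ) : |ramp a n ξ| ≤ 1 :=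
  abs_le.2
    ⟨(neg_nonpos.2 zero_le_one).trans (le_min zero_le_one (le_max_left _ _)), min_le_left _ _⟩

lemma tendsto_ramp (a ξ : ℝ) :
    Tendsto (fun n => ramp a n ξ) atTop (𝓝 ((Ioi a).indicator 1 ξ)) := by
  by_cases hξ : a < ξ
  · rw [indicator_of_mem (show ξ ∈ Ioi a from hξ), Pi.one_apply]
    have hslope : Tendsto (fun n : ℕ => n * (ξ - a)) atTop atTop :=
      tendsto_natCast_atTop_atTop.atTop_mul_const (sub_pos.2 hξ)
    refine tendsto_const_nhds.congr' ?_
    filter_upwards [hslope.eventually_ge_atTop 1] with n hn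
    simp [ramp, max_eq_right (zero_le_one.trans hn), hn]
  · rw [indicator_of_notMem (show ξ ∉ Ioi a from hξ)]
    refine tendsto_const_nhds.congr fun n => ?_
    have hslope : (n : ℝ) * (ξ - a) ≤ 0 :=
      mul_nonpos_of_nonneg_of_nonpos n.cast_nonneg (sub_nonpos.2 (not_lt.1 hξ))
    simp [ramp, hslope]

lemma tendsto_integral_ramp (p : Measure ℝ) [IsFiniteMeasure p] (a : ℝ) :
    Tendsto (fun n => ∫ ξ, ramp a n ξ ∂p) atTop (𝓝 (p.real (Ioi a))) := by
  rw [← integral_indicator_one measurableSet_Ioi]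
  exact tendsto_integral_of_dominated_convergence (fun _ => 1)
    (fun n => (continuous_ramp a n).aestronglyMeasurable) (integrable_const 1)
    (fun n => ae_of_all _ (abs_ramp_le_one a n)) (ae_of_all _ (tendsto_ramp a))

lemma cdf_le_of_forall_integral_ramp_le {p q : Measure ℝ} [IsProbabilityMeasure p]
    [IsProbabilityMeasure q] (h : ∀ (r : ℚ) (n : ℕ), ∫ ξ, ramp r n ξ ∂p ≤ ∫ ξ, ramp r n ξ ∂q)
    (ξ : ℝ) : q (Iic ξ) ≤ p (Iic ξ) := by
  have hrat (r : ℚ) : cdf q r ≤ cdf p r := by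
    have hIoi : p.real (Ioi r) ≤ q.real (Ioi r) :=
      le_of_tendsto_of_tendsto' (tendsto_integral_ramp p r) (tendsto_integral_ramp q r) (h r)
    rw [cdf_eq_real, cdf_eq_real, ← compl_Ioi, probReal_compl_eq_one_sub measurableSet_Ioi,
      probReal_compl_eq_one_sub measurableSet_Ioi]
    linarith
  rw [← ofReal_cdf, ← ofReal_cdf]
  exact ENNReal.ofReal_le_ofReal (StieltjesFunction.le_of_forall_rat_le hrat ξ)

section CompProd

variable {α β : Type*} [MeasurableSpace α] [MeasurableSpace β] {μ : Measure α} [SFinite μ]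
  {κ₁ κ₂ : Kernel α β} [IsSFiniteKernel κ₁] [IsSFiniteKernel κ₂]

lemma integral_compProd_mono {f : α × β → ℝ} (hf₁ : Integrable f (μ ⊗ₘ κ₁))
    (hf₂ : Integrable f (μ ⊗ₘ κ₂))
    (h : ∀ᵐ x ∂μ, ∫ y, f (x, y) ∂κ₁ x ≤ ∫ y, f (x, y) ∂κ₂ x) :
    ∫ p, f p ∂(μ ⊗ₘ κ₁) ≤ ∫ p, f p ∂(μ ⊗ₘ κ₂) := by
  rw [Measure.integral_compProd hf₁, Measure.integral_compProd hf₂]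
  exact integral_mono_ae hf₁.integral_compProd hf₂.integral_compProd h

lemma ae_integral_le_of_forall_setIntegral_prod_univ_le {g : β → ℝ}
    (hg₁ : Integrable (fun p : α × β => g p.2) (μ ⊗ₘ κ₁))
    (hg₂ : Integrable (fun p : α × β => g p.2) (μ ⊗ₘ κ₂))
    (h : ∀ s, MeasurableSet s →
      ∫ p in s ×ˢ univ, g p.2 ∂(μ ⊗ₘ κ₁) ≤ ∫ p in s ×ˢ univ, g p.2 ∂(μ ⊗ₘ κ₂)) :
    ∀ᵐ x ∂μ, ∫ y, g y ∂κ₁ x ≤ ∫ y, g y ∂κ₂ x := by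
  refine ae_le_of_forall_setIntegral_le hg₁.integral_compProd hg₂.integral_compProd
    fun s hs _ => ?_
  simpa only [Measure.setIntegral_compProd hs MeasurableSet.univ hg₁.integrableOn,
    Measure.setIntegral_compProd hs MeasurableSet.univ hg₂.integrableOn, Measure.restrict_univ]
    using h s hs

end CompProd

/-- Characterisation of the partial order on Young measures `ν_i = μ ⊗ κ_i` associated
with Markov kernels `κ₁, κ₂` from `X` to `ℝ`: `∫ f dν₁ ≤ ∫ f dν₂` holds for every bounded
measurable `f : X × ℝ → ℝ` with `f(x, ·)` continuous and nondecreasing for every `x`, if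
and only if for `μ`-a.e. `x` the cumulative distribution functions satisfy
`F_{κ₁(x)}(ξ) ≥ F_{κ₂(x)}(ξ)` for every `ξ ∈ ℝ`. -/
theorem youngLE_iff_cdf_ge {X : Type*} [MeasurableSpace X]
    (μ : Measure X) [IsFiniteMeasure μ]
    (κ₁ κ₂ : Kernel X ℝ) [IsMarkovKernel κ₁] [IsMarkovKernel κ₂] :
    (∀ f : X × ℝ → ℝ, Measurable f → (∃ C, ∀ p, |f p| ≤ C) →
        (∀ x, Continuous fun ξ => f (x, ξ)) →
        (∀ x, Monotone fun ξ => f (x, ξ)) →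
        ∫ p, f p ∂(μ.compProd κ₁) ≤ ∫ p, f p ∂(μ.compProd κ₂)) ↔
      (∀ᵐ x ∂μ, ∀ ξ : ℝ, κ₂ x (Set.Iic ξ) ≤ κ₁ x (Set.Iic ξ)) := by
  have integrable {f : X × ℝ → ℝ} (hf : Measurable f) {C : ℝ} (hC : ∀ p, |f p| ≤ C)
      (κ : Kernel X ℝ) [IsMarkovKernel κ] : Integrable f (μ ⊗ₘ κ) :=
    Integrable.of_bound hf.aestronglyMeasurable C (ae_of_all _ hC)
  constructor
  · intro H
    have hramp (r : ℚ) (n : ℕ) : ∀ᵐ x ∂μ, ∫ ξ, ramp r n ξ ∂κ₁ x ≤ ∫ ξ, ramp r n ξ ∂κ₂ x := by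
      have hmeas : Measurable fun p : X × ℝ => ramp r n p.2 :=
        (continuous_ramp r n).measurable.comp measurable_snd
      refine ae_integral_le_of_forall_setIntegral_prod_univ_le
        (integrable hmeas (fun p => abs_ramp_le_one r n p.2) κ₁)
        (integrable hmeas (fun p => abs_ramp_le_one r n p.2) κ₂) fun s hs => ?_
      rw [← integral_indicator (hs.prod .univ), ← integral_indicator (hs.prod .univ)]
      refine H _ (hmeas.indicator (hs.prod .univ)) ⟨1, fun p => ?_⟩ (fun x => ?_) (fun x => ?_)
      · by_cases hp : p ∈ s ×ˢ univ <;> simp [hp, abs_ramp_le_one]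
      · by_cases hx : x ∈ s <;> simp [hx, indicator, continuous_ramp, continuous_const]
      · by_cases hx : x ∈ s <;> simp [hx, indicator, monotone_ramp, monotone_const]
    filter_upwards [ae_all_iff.2 fun r => ae_all_iff.2 (hramp r)] with x hx
    exact cdf_le_of_forall_integral_ramp_le hx
  · rintro hcdf f hf ⟨C, hC⟩ hcont hmono
    refine integral_compProd_mono (integrable hf hC κ₁) (integrable hf hC κ₂) ?_
    filter_upwards [hcdf] with x hx
    exact integral_le_of_cdf_le hx (hcont x) (hmono x) fun ξ => hC (x, ξ)
end
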